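/- Let t ≥ 3 be a natural number, let G be a finite simple graph, let S be a set of vertices of G, and let u, v ∈ S be two distinct vertices adjacent in G. Suppose G ⊕ S is diamond-free and K_{1,t}-free. Then the set S ∩ (N(u) \ N[v]) contains no t vertices that are pairwise adjacent in G, and the set (N(u) \ N[v]) \ S contains no t vertices that are pairwise nonadjacent in G. (That is, N(u) \ N[v] induces a (t-1, t-1)-split graph with split partition (S ∩ (N(u) \ N[v]), (N(u) \ N[v]) \ S).) -/

import Mathlib

/-- Subgraph complementation: `scompl G S` complements the subgraph of `G` induced by `S`. -/
def scompl {V : Type*} (G : SimpleGraph V) (S : Set V) : SimpleGraph V where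
  Adj x y := x ≠ y ∧ ((x ∈ S ∧ y ∈ S ∧ ¬ G.Adj x y) ∨ (¬(x ∈ S ∧ y ∈ S) ∧ G.Adj x y))
  symm := ⟨by
    rintro x y ⟨hxy, h⟩
    refine ⟨hxy.symm, ?_⟩
    rcases h with ⟨hx, hy, h⟩ | ⟨h, hadj⟩
    · exact Or.inl ⟨hy, hx, fun h' => h (G.adj_symm h')⟩
    · exact Or.inr ⟨fun hc => h ⟨hc.2, hc.1⟩, G.adj_symm hadj⟩⟩
  loopless := ⟨fun x h => h.1 rfl⟩

/-- Degree of a vertex in a finite simple graph. -/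
noncomputable def deg {V : Type*} [Fintype V] (G : SimpleGraph V) (v : V) : ℕ :=
  (G.neighborSet v).ncard

/-- `a, b, c, d` form an induced diamond with `a`, `b` its degree-2 vertices. -/
def IsDiamond {V : Type*} (G : SimpleGraph V) (a b c d : V) : Prop :=
  a ≠ b ∧ a ≠ c ∧ a ≠ d ∧ b ≠ c ∧ b ≠ d ∧ c ≠ d ∧
  G.Adj a c ∧ G.Adj a d ∧ G.Adj b c ∧ G.Adj b d ∧ G.Adj c d ∧ ¬ G.Adj a b

def DiamondFree {V : Type*} (G : SimpleGraph V) : Prop :=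
  ∀ a b c d : V, ¬ IsDiamond G a b c d

/-- `r` together with the `t` distinct leaves `f 0, …, f (t-1)` forms an induced `K_{1,t}`
with center `r`. -/
def IsStar {V : Type*} (G : SimpleGraph V) (t : ℕ) (r : V) (f : Fin t → V) : Prop :=
  Function.Injective f ∧ (∀ i, G.Adj r (f i)) ∧ ∀ i j, i ≠ j → ¬ G.Adj (f i) (f j)

def StarFree {V : Type*} (G : SimpleGraph V) (t : ℕ) : Prop :=
  ∀ (r : V) (f : Fin t → V), ¬ IsStar G t r f

theorem StarFree.false_of_finset {V : Type*} {H : SimpleGraph V} {t : ℕ} (hsf : StarFree H t)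
    (r : V) (T : Finset V) (hcard : T.card = t) (hr : ∀ x ∈ T, H.Adj r x)
    (hT : ∀ x ∈ T, ∀ y ∈ T, x ≠ y → ¬ H.Adj x y) : False := by
  let e := T.equivFinOfCardEq hcard
  let f : Fin t → V := fun i => e.symm i
  have hf : Function.Injective f := Subtype.val_injective.comp e.symm.injective
  exact hsf r f ⟨hf, fun i => hr _ (e.symm i).2,
    fun i j hij => hT _ (e.symm i).2 _ (e.symm j).2 (hf.ne hij)⟩

section scompl

variable {V : Type*} {G : SimpleGraph V} {S : Set V} {x y : V}

theorem scompl_adj_of_mem (hx : x ∈ S) (hy : y ∈ S) :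
    (scompl G S).Adj x y ↔ x ≠ y ∧ ¬ G.Adj x y := by
  simp [scompl, hx, hy]

theorem scompl_adj_of_left_notMem (hx : x ∉ S) : (scompl G S).Adj x y ↔ G.Adj x y := by
  simp only [scompl, hx, false_and, not_false_eq_true, true_and, false_or, and_iff_right_iff_imp]
  exact G.ne_of_adj

end scompl

theorem stmt12_general {V : Type*} (t : ℕ) (G : SimpleGraph V)
    (S : Set V) (u v : V) (hv : v ∈ S)
    (hsf : StarFree (scompl G S) t) :
    (¬ ∃ T : Finset V, T.card = t ∧
        (∀ x ∈ T, x ∈ S ∧ G.Adj u x ∧ x ≠ v ∧ ¬ G.Adj v x) ∧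
        (∀ x ∈ T, ∀ y ∈ T, x ≠ y → G.Adj x y)) ∧
    (¬ ∃ T : Finset V, T.card = t ∧
        (∀ x ∈ T, x ∉ S ∧ G.Adj u x ∧ x ≠ v ∧ ¬ G.Adj v x) ∧
        (∀ x ∈ T, ∀ y ∈ T, x ≠ y → ¬ G.Adj x y)) := by
  -- A G-clique in S non-adjacent to v is a star centred at v in G ⊕ S; a G-independent set
  -- outside S adjacent to u is a star centred at u.
  constructor
  · rintro ⟨T, hcard, hmem, hclique⟩
    refine hsf.false_of_finset v T hcard (fun x hx => ?_) (fun x hx y hy hxy => ?_)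
    · obtain ⟨hxS, -, hxv, hvx⟩ := hmem x hx
      exact (scompl_adj_of_mem hv hxS).2 ⟨hxv.symm, hvx⟩
    · rw [scompl_adj_of_mem (hmem x hx).1 (hmem y hy).1]
      exact fun h => h.2 (hclique x hx y hy hxy)
  · rintro ⟨T, hcard, hmem, hindep⟩
    refine hsf.false_of_finset u T hcard (fun x hx => ?_) (fun x hx y hy hxy => ?_)
    · exact ((scompl_adj_of_left_notMem (hmem x hx).1).2 (hmem x hx).2.1.symm).symm
    · rw [scompl_adj_of_left_notMem (hmem x hx).1]
      exact hindep x hx y hy hxy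

theorem stmt12 {V : Type*} [Fintype V] (t : ℕ) (ht : 3 ≤ t) (G : SimpleGraph V)
    (S : Set V) (u v : V) (hu : u ∈ S) (hv : v ∈ S) (huv : G.Adj u v)
    (hdf : DiamondFree (scompl G S)) (hsf : StarFree (scompl G S) t) :
    (¬ ∃ T : Finset V, T.card = t ∧
        (∀ x ∈ T, x ∈ S ∧ G.Adj u x ∧ x ≠ v ∧ ¬ G.Adj v x) ∧
        (∀ x ∈ T, ∀ y ∈ T, x ≠ y → G.Adj x y)) ∧
    (¬ ∃ T : Finset V, T.card = t ∧
        (∀ x ∈ T, x ∉ S ∧ G.Adj u x ∧ x ≠ v ∧ ¬ G.Adj v x) ∧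
        (∀ x ∈ T, ∀ y ∈ T, x ≠ y → ¬ G.Adj x y)) :=
  stmt12_general t G S u v hv hsf
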